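/- arXiv:1405.6672 — 2 statements merged into one kernel-verified Lean document; each statement's English description precedes it below -/
import Mathlib

section
/- Both the minimal separation B between code points of optimal codebooks and the minimal optimal-cell mass p_min are strictly positive; that is, B = inf_{c* ∈ M, i ≠ j} ‖c_i* − c_j*‖ > 0 and p_min = inf_{c* ∈ M, 1 ≤ i ≤ k} P(V_i(c*)) > 0. -/
/-!
Fix `k` distinct points of the support of `P` and `r > 0` with the points `6r`-separated.
A codebook with a repeated centre has at most `k - 1` distinct centres, so one of the points, `y`,
is at distance `≥ 3r` from all of them; moving the repeated centre to `y` lowers the distortion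
by at least `3r² P(B(y, r))`, a gain `η > 0` independent of the codebook. In an optimal codebook,
merging `c j` into `c i` costs at most `4M ‖c i - c j‖ P(V_j)` and produces a repeated centre, so
`η ≤ 4M ‖c i - c j‖ P(V_j)`: this bounds both `‖c i - c j‖` and `P(V_j)` away from `0`.
-/

open MeasureTheory Metric

noncomputable section

variable {H : Type*} [NormedAddCommGroup H] [InnerProductSpace ℝ H] [MeasurableSpace H]

/-- `qgamma k c x = min_j ‖x - c j‖²`. -/
def qgamma (k : ℕ) (c : Fin k → H) (x : H) : ℝ := ⨅ j : Fin k, ‖x - c j‖ ^ 2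

/-- distortion (risk) of a codebook. -/
def qrisk (k : ℕ) (P : Measure H) (c : Fin k → H) : ℝ := ∫ x, qgamma k c x ∂P

/-- the set of optimal codebooks in `B(0,M)^k`. -/
def qopt (k : ℕ) (P : Measure H) (M : ℝ) : Set (Fin k → H) :=
  {c | (∀ i, ‖c i‖ ≤ M) ∧
    ∀ c' : Fin k → H, (∀ i, ‖c' i‖ ≤ M) → qrisk k P c ≤ qrisk k P c'}

/-- the `i`-th (closed) Voronoi cell of the codebook `c`. -/
def vcell (k : ℕ) (c : Fin k → H) (i : Fin k) : Set H :=
  {x | ∀ j : Fin k, ‖x - c i‖ ≤ ‖x - c j‖}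

/-- `B`, the minimal separation between code points of optimal codebooks. -/
def qB (k : ℕ) (P : Measure H) (M : ℝ) : ℝ :=
  sInf {b | ∃ c ∈ qopt k P M, ∃ i j : Fin k, i ≠ j ∧ b = ‖c i - c j‖}

/-- `p_min`, the minimal mass of a Voronoi cell of an optimal codebook. -/
def qpmin (k : ℕ) (P : Measure H) (M : ℝ) : ℝ :=
  sInf {p | ∃ c ∈ qopt k P M, ∃ i : Fin k, p = (P (vcell k c i)).toReal}

/-- `P` is `M`-bounded: its support is contained in the closed ball `B(0,M)`. -/
def mbounded (P : Measure H) (M : ℝ) : Prop := P (closedBall (0 : H) M)ᶜ = 0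

/-- the support of `P` contains more than `k` points. -/
def suppGT (P : Measure H) (k : ℕ) : Prop :=
  ∀ S : Finset H, S.card ≤ k → P ((S : Set H)ᶜ) ≠ 0

set_option linter.unusedSectionVars false

open Function Set

theorem Finset.exists_pos_forall_le {ι : Type*} {s : Finset ι} {f : ι → ℝ}
    (hf : ∀ i ∈ s, 0 < f i) : ∃ δ > 0, ∀ i ∈ s, δ ≤ f i := by
  have h : ∀ᶠ δ in nhdsWithin (0 : ℝ) (Set.Ioi 0), ∀ i ∈ s, δ ≤ f i :=
    (Filter.eventually_all_finset s).2 fun i hi =>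
      nhdsWithin_le_nhds (eventually_le_nhds (hf i hi))
  obtain ⟨δ, hδs, hδ⟩ := (h.and self_mem_nhdsWithin).exists
  exact ⟨δ, hδ, hδs⟩

theorem Finset.exists_pos_pairwise_le_dist {α : Type*} [MetricSpace α] (T : Finset α) :
    ∃ δ > 0, (T : Set α).Pairwise fun y y' => δ ≤ dist y y' := by
  obtain ⟨δ, hδ, h⟩ := T.offDiag.exists_pos_forall_le (f := fun p => dist p.1 p.2)
    fun p hp => dist_pos.2 (Finset.mem_offDiag.1 hp).2.2
  exact ⟨δ, hδ, fun y hy y' hy' hne => h (y, y') (Finset.mem_offDiag.2 ⟨hy, hy', hne⟩)⟩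

theorem Finset.exists_forall_le_dist_of_card_lt {α : Type*} [PseudoMetricSpace α]
    {S T : Finset α} {ρ : ℝ} (hT : (T : Set α).Pairwise fun y y' => 2 * ρ ≤ dist y y')
    (hST : S.card < T.card) : ∃ y ∈ T, ∀ z ∈ S, ρ ≤ dist z y := by
  by_contra! hnear
  choose! f hfS hf using hnear
  obtain ⟨y, hy, y', hy', hne, hfeq⟩ := Finset.exists_ne_map_eq_of_card_lt_of_maps_to hST hfS
  have hfy := hf y hy
  rw [hfeq] at hfy
  linarith [hT hy hy' hne, hf y' hy', dist_triangle_left y y' (f y')]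

theorem norm_update_le {ι E : Type*} [DecidableEq ι] [Norm E] {c : ι → E} {M : ℝ}
    (hc : ∀ i, ‖c i‖ ≤ M) {v : E} (hv : ‖v‖ ≤ M) (j : ι) : ∀ i, ‖update c j v i‖ ≤ M :=
  (forall_update_iff c fun _ w => ‖w‖ ≤ M).2 ⟨hv, fun i _ => hc i⟩

theorem sq_norm_sub_sq_norm_le {E : Type*} [SeminormedAddCommGroup E] (a b : E) :
    ‖a‖ ^ 2 - ‖b‖ ^ 2 ≤ ‖a - b‖ * (‖a‖ + ‖b‖) := by
  have h : ‖a‖ ^ 2 - ‖b‖ ^ 2 = (‖a‖ - ‖b‖) * (‖a‖ + ‖b‖) := by ring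
  rw [h]
  exact mul_le_mul_of_nonneg_right (norm_sub_norm_le a b) (by positivity)

section Quantization

variable {k : ℕ}

theorem qgamma_nonneg (c : Fin k → H) (x : H) : 0 ≤ qgamma k c x :=
  Real.iInf_nonneg fun _ => sq_nonneg _

theorem qgamma_le (c : Fin k → H) (x : H) (j : Fin k) : qgamma k c x ≤ ‖x - c j‖ ^ 2 :=
  ciInf_le ⟨0, forall_mem_range.2 fun _ => sq_nonneg _⟩ j

theorem exists_qgamma_eq [Nonempty (Fin k)] (c : Fin k → H) (x : H) :
    ∃ j, qgamma k c x = ‖x - c j‖ ^ 2 :=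
  exists_eq_ciInf_of_finite.imp fun _ h => h.symm

theorem mem_vcell_iff {c : Fin k → H} {j : Fin k} {x : H} :
    x ∈ vcell k c j ↔ qgamma k c x = ‖x - c j‖ ^ 2 := by
  have : Nonempty (Fin k) := ⟨j⟩
  refine ⟨fun h => le_antisymm (qgamma_le c x j) (le_ciInf fun m => ?_), fun h m => ?_⟩
  · exact pow_le_pow_left₀ (norm_nonneg _) (h m) 2
  · exact (pow_le_pow_iff_left₀ (norm_nonneg _) (norm_nonneg _) two_ne_zero).1
      (h ▸ qgamma_le c x m)

theorem isClosed_vcell (c : Fin k → H) (j : Fin k) : IsClosed (vcell k c j) := by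
  simp only [vcell, ofPred_forall]
  exact isClosed_iInter fun m => isClosed_le (by fun_prop) (by fun_prop)

theorem qgamma_update_le (c : Fin k → H) (j : Fin k) (v x : H) :
    qgamma k (update c j v) x ≤
      qgamma k c x + (vcell k c j).indicator (fun x => ‖x - v‖ ^ 2 - ‖x - c j‖ ^ 2) x := by
  by_cases hx : x ∈ vcell k c j
  · rw [indicator_of_mem hx, mem_vcell_iff.1 hx, add_sub_cancel]
    simpa using qgamma_le (update c j v) x j
  · have : Nonempty (Fin k) := ⟨j⟩
    obtain ⟨m, hm⟩ := exists_qgamma_eq c x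
    have hmj : m ≠ j := by
      rintro rfl
      exact hx (mem_vcell_iff.2 hm)
    calc qgamma k (update c j v) x ≤ ‖x - update c j v m‖ ^ 2 := qgamma_le _ x m
      _ = qgamma k c x + (vcell k c j).indicator _ x := by
        rw [update_of_ne hmj, hm, indicator_of_notMem hx, add_zero]

theorem qgamma_update_le_of_eq {c : Fin k → H} {i j : Fin k} (hij : i ≠ j) (hcij : c i = c j)
    (v x : H) : qgamma k (update c j v) x ≤ qgamma k c x := by
  have : Nonempty (Fin k) := ⟨j⟩
  obtain ⟨m, hm⟩ := exists_qgamma_eq c x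
  rw [hm]
  by_cases hmj : m = j
  · simpa [hmj, update_of_ne hij, hcij] using qgamma_le (update c j v) x i
  · simpa [update_of_ne hmj] using qgamma_le (update c j v) x m

theorem qgamma_update_add_indicator_le {c : Fin k → H} {i j : Fin k} (hij : i ≠ j)
    (hcij : c i = c j) {y : H} {r : ℝ} (hfar : ∀ m, 3 * r ≤ dist (c m) y) (x : H) :
    qgamma k (update c j y) x + (ball y r).indicator (fun _ => 3 * r ^ 2) x ≤ qgamma k c x := by
  by_cases hx : x ∈ ball y r
  · have : Nonempty (Fin k) := ⟨j⟩
    have hxy : dist x y < r := hx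
    have hnew : qgamma k (update c j y) x ≤ r ^ 2 := by
      refine (qgamma_le _ x j).trans ?_
      rw [update_self, ← dist_eq_norm]
      exact pow_le_pow_left₀ dist_nonneg hxy.le 2
    have hold : (2 * r) ^ 2 ≤ qgamma k c x := le_ciInf fun m => by
      rw [← dist_eq_norm]
      refine pow_le_pow_left₀ (by linarith [dist_nonneg (x := x) (y := y)]) ?_ 2
      linarith [hfar m, dist_triangle (c m) x y, dist_comm x (c m)]
    rw [indicator_of_mem hx]
    linarith
  · rw [indicator_of_notMem hx, add_zero]
    exact qgamma_update_le_of_eq hij hcij y x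

variable {P : Measure H} {M : ℝ}

theorem ae_norm_le_of_mbounded (hbd : mbounded P M) : ∀ᵐ x ∂P, ‖x‖ ≤ M := by
  filter_upwards [mem_ae_iff.2 hbd] with x hx
  exact mem_closedBall_zero_iff.1 hx

theorem support_subset_closedBall (hbd : mbounded P M) : P.support ⊆ closedBall 0 M :=
  Measure.support_subset_of_isClosed isClosed_closedBall (mem_ae_iff.2 hbd)

theorem exists_finset_card_eq_subset_support [SecondCountableTopology H]
    (hsupp : suppGT P k) : ∃ T : Finset H, T.card = k ∧ ↑T ⊆ P.support := by
  have hk : (k : ℕ∞) ≤ P.support.encard := by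
    by_contra! hlt
    have hfin := finite_of_encard_le_coe hlt.le
    refine hsupp hfin.toFinset ?_ (measure_mono_null ?_ Measure.measure_compl_support)
    · exact_mod_cast hfin.encard_eq_coe_toFinset_card ▸ hlt.le
    · simp
  obtain ⟨t, hts, htk⟩ := exists_subset_encard_eq hk
  have hfin := finite_of_encard_eq_coe htk
  refine ⟨hfin.toFinset, ?_, by simpa using hts⟩
  exact_mod_cast hfin.encard_eq_coe_toFinset_card ▸ htk

variable [Nonempty (Fin k)]

theorem qgamma_le_of_norm_le {c : Fin k → H} {x : H} (hc : ∀ i, ‖c i‖ ≤ M) (hx : ‖x‖ ≤ M) :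
    qgamma k c x ≤ (2 * M) ^ 2 := by
  obtain ⟨j⟩ := ‹Nonempty (Fin k)›
  refine (qgamma_le c x j).trans (pow_le_pow_left₀ (norm_nonneg _) ?_ 2)
  linarith [norm_sub_le x (c j), hc j]

variable [BorelSpace H]

section FiniteMeasure

variable [IsFiniteMeasure P]

theorem integrable_qgamma (hP : ∀ᵐ x ∂P, ‖x‖ ≤ M) {c : Fin k → H} (hc : ∀ i, ‖c i‖ ≤ M) :
    Integrable (qgamma k c) P := by
  refine .of_bound (Measurable.iInf fun j => by fun_prop).aestronglyMeasurable ((2 * M) ^ 2) ?_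
  filter_upwards [hP] with x hx
  rw [Real.norm_of_nonneg (qgamma_nonneg c x)]
  exact qgamma_le_of_norm_le hc hx

theorem qrisk_le_add_integral (hP : ∀ᵐ x ∂P, ‖x‖ ≤ M) {c c' : Fin k → H} (hc : ∀ i, ‖c i‖ ≤ M)
    (hc' : ∀ i, ‖c' i‖ ≤ M) {f : H → ℝ} (hf : Integrable f P)
    (h : ∀ᵐ x ∂P, qgamma k c' x ≤ qgamma k c x + f x) :
    qrisk k P c' ≤ qrisk k P c + ∫ x, f x ∂P := by
  rw [qrisk, qrisk, ← integral_add (integrable_qgamma hP hc) hf]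
  exact integral_mono_ae (integrable_qgamma hP hc') ((integrable_qgamma hP hc).add hf) h

theorem qrisk_update_le (hP : ∀ᵐ x ∂P, ‖x‖ ≤ M) {c : Fin k → H} (hc : ∀ i, ‖c i‖ ≤ M)
    {v : H} (hv : ‖v‖ ≤ M) (j : Fin k) :
    qrisk k P (update c j v) ≤ qrisk k P c + 4 * M * ‖v - c j‖ * P.real (vcell k c j) := by
  have hcell := (isClosed_vcell c j).measurableSet
  have h := qrisk_le_add_integral hP hc (norm_update_le hc hv j)
    ((integrable_const (4 * M * ‖v - c j‖)).indicator hcell) ?_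
  · rwa [integral_indicator_const _ hcell, smul_eq_mul, mul_comm (P.real _)] at h
  filter_upwards [hP] with x hx
  refine (qgamma_update_le c j v x).trans ((add_le_add_iff_left _).2 (indicator_le_indicator ?_))
  calc ‖x - v‖ ^ 2 - ‖x - c j‖ ^ 2 ≤ ‖(x - v) - (x - c j)‖ * (‖x - v‖ + ‖x - c j‖) :=
        sq_norm_sub_sq_norm_le _ _
    _ ≤ ‖v - c j‖ * (4 * M) := by
        rw [sub_sub_sub_cancel_left, norm_sub_rev]
        gcongr
        linarith [norm_sub_le x v, norm_sub_le x (c j), hc j]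
    _ = 4 * M * ‖v - c j‖ := by ring

theorem qrisk_update_add_le (hP : ∀ᵐ x ∂P, ‖x‖ ≤ M) {c : Fin k → H} (hc : ∀ i, ‖c i‖ ≤ M)
    {i j : Fin k} (hij : i ≠ j) (hcij : c i = c j) {y : H} (hy : ‖y‖ ≤ M) {r : ℝ}
    (hfar : ∀ m, 3 * r ≤ dist (c m) y) :
    qrisk k P (update c j y) + 3 * r ^ 2 * P.real (ball y r) ≤ qrisk k P c := by
  have h := qrisk_le_add_integral hP hc (norm_update_le hc hy j)
    (f := fun x => -(ball y r).indicator (fun _ => 3 * r ^ 2) x)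
    ((integrable_const (3 * r ^ 2)).indicator measurableSet_ball).neg
    (.of_forall fun x => by linarith [qgamma_update_add_indicator_le hij hcij hfar x])
  rw [integral_neg, integral_indicator_const _ measurableSet_ball, smul_eq_mul] at h
  linarith

theorem exists_pos_qrisk_add_le_of_not_injective [SecondCountableTopology H]
    (hbd : mbounded P M) (hsupp : suppGT P k) :
    ∃ η > 0, ∀ c : Fin k → H, (∀ i, ‖c i‖ ≤ M) → ¬Injective c →
      ∃ c' : Fin k → H, (∀ i, ‖c' i‖ ≤ M) ∧ qrisk k P c' + η ≤ qrisk k P c := by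
  classical
  obtain ⟨T, hTk, hTsupp⟩ := exists_finset_card_eq_subset_support hsupp
  obtain ⟨δ, hδ, hTsep⟩ := T.exists_pos_pairwise_le_dist
  obtain ⟨η, hη, hηT⟩ := T.exists_pos_forall_le
    (f := fun y => 3 * (δ / 6) ^ 2 * P.real (ball y (δ / 6))) fun y hy => by
      have hball := (Measure.mem_support_iff_forall y).1 (hTsupp hy) _
        (ball_mem_nhds y (by positivity : 0 < δ / 6))
      have := ENNReal.toReal_pos hball.ne' (measure_ne_top P _)
      positivity
  refine ⟨η, hη, fun c hc hinj => ?_⟩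
  have hcard : (Finset.univ.image c).card < T.card := by
    have hlt : (Finset.univ.image c).card < (Finset.univ : Finset (Fin k)).card :=
      Finset.card_image_le.lt_of_ne fun h =>
        hinj (injOn_univ.1 (by simpa using Finset.card_image_iff.1 h))
    rw [Finset.card_fin] at hlt
    omega
  obtain ⟨y, hyT, hfar⟩ := Finset.exists_forall_le_dist_of_card_lt (ρ := 3 * (δ / 6))
    (fun a ha b hb hab => by linarith [hTsep ha hb hab]) hcard
  obtain ⟨i, j, hcij, hij⟩ : ∃ i j, c i = c j ∧ i ≠ j := by simpa [Injective] using hinj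
  have hy : ‖y‖ ≤ M := mem_closedBall_zero_iff.1 (support_subset_closedBall hbd (hTsupp hyT))
  refine ⟨update c j y, norm_update_le hc hy j, ?_⟩
  have := qrisk_update_add_le (ae_norm_le_of_mbounded hbd) hc hij hcij hy
    fun m => hfar _ (Finset.mem_image_of_mem c (Finset.mem_univ m))
  linarith [hηT y hyT]

end FiniteMeasure

section Optimal

variable {η : ℝ} (himp : ∀ c : Fin k → H, (∀ i, ‖c i‖ ≤ M) → ¬Injective c →
  ∃ c' : Fin k → H, (∀ i, ‖c' i‖ ≤ M) ∧ qrisk k P c' + η ≤ qrisk k P c)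
  (hP : ∀ᵐ x ∂P, ‖x‖ ≤ M) {c : Fin k → H} (hc : c ∈ qopt k P M) {i j : Fin k} (hij : i ≠ j)
include himp hP hc hij

theorem le_mul_measureReal_vcell_of_mem_qopt [IsFiniteMeasure P] :
    η ≤ 4 * M * ‖c i - c j‖ * P.real (vcell k c j) := by
  have hdup : ¬Injective (update c j (c i)) := fun hinj =>
    hij (hinj (by rw [update_self, update_of_ne hij]))
  obtain ⟨c', hc'M, hc'⟩ := himp _ (norm_update_le hc.1 (hc.1 i) j) hdup
  linarith [hc.2 c' hc'M, qrisk_update_le hP hc.1 (hc.1 i) j]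

theorem div_le_norm_sub_of_mem_qopt [IsProbabilityMeasure P] (hM : 0 < M) :
    η / (4 * M) ≤ ‖c i - c j‖ := by
  have := (le_mul_measureReal_vcell_of_mem_qopt himp hP hc hij).trans
    (mul_le_of_le_one_right (by positivity) measureReal_le_one)
  rw [div_le_iff₀ (by positivity)]
  linarith

theorem div_le_measureReal_vcell_of_mem_qopt [IsFiniteMeasure P] (hM : 0 < M) :
    η / (8 * M ^ 2) ≤ P.real (vcell k c j) := by
  have hcij : ‖c i - c j‖ ≤ 2 * M := by linarith [norm_sub_le (c i) (c j), hc.1 i, hc.1 j]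
  have := (le_mul_measureReal_vcell_of_mem_qopt himp hP hc hij).trans
    (mul_le_mul_of_nonneg_right (mul_le_mul_of_nonneg_left hcij (by positivity))
      measureReal_nonneg)
  rw [div_le_iff₀ (by positivity)]
  linarith

end Optimal

end Quantization

theorem stmt0_general [BorelSpace H] [SecondCountableTopology H]
    (k : ℕ) (hk : 2 ≤ k) (P : Measure H) [IsProbabilityMeasure P]
    (M : ℝ) (hM : 0 < M) (hbd : mbounded P M) (hsupp : suppGT P k)
    (hne : (qopt k P M).Nonempty) :
    0 < qB k P M ∧ 0 < qpmin k P M := by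
  have : Nontrivial (Fin k) := Fin.nontrivial_iff_two_le.2 hk
  have hP := ae_norm_le_of_mbounded hbd
  obtain ⟨η, hη, himp⟩ := exists_pos_qrisk_add_le_of_not_injective hbd hsupp
  obtain ⟨c₀, hc₀⟩ := hne
  obtain ⟨i₀, j₀, hij₀⟩ := exists_pair_ne (Fin k)
  constructor
  · refine (by positivity : 0 < η / (4 * M)).trans_le
      (le_csInf ⟨_, c₀, hc₀, i₀, j₀, hij₀, rfl⟩ ?_)
    rintro _ ⟨c, hc, i, j, hij, rfl⟩
    exact div_le_norm_sub_of_mem_qopt himp hP hc hij hM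
  · refine (by positivity : 0 < η / (8 * M ^ 2)).trans_le (le_csInf ⟨_, c₀, hc₀, j₀, rfl⟩ ?_)
    rintro _ ⟨c, hc, j, rfl⟩
    obtain ⟨i, hij⟩ := exists_ne j
    exact div_le_measureReal_vcell_of_mem_qopt himp hP hc hij hM

/-- Proposition 2.1: both `B` and `p_min` are positive. -/
theorem stmt0 [BorelSpace H] [SecondCountableTopology H] [CompleteSpace H]
    (k : ℕ) (hk : 2 ≤ k) (P : Measure H) [IsProbabilityMeasure P]
    (M : ℝ) (hM : 0 < M) (hbd : mbounded P M) (hsupp : suppGT P k)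
    (hne : (qopt k P M).Nonempty) :
    0 < qB k P M ∧ 0 < qpmin k P M :=
  stmt0_general k hk P M hM hbd hsupp hne

end
end

section
/- For any σ, σ' ∈ {−1,+1}^m with Σ_i σ_i = Σ_i σ'_i = 0, the distortions of the quantizers Q_σ, Q_{σ'} under the source P_σ satisfy R(Q_{σ'}, P_σ) = R(Q_σ, P_σ) + (Δ² δ / (8m)) ρ(σ, σ'), where ρ(σ,σ') = Σ_{i=1}^m |σ_i − σ'_i|. -/
open MeasureTheory Metric
open scoped Classical

noncomputable section

/-- normalization constant of the cone-shaped density of radius `ρ` on `ℝ^d`. -/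
def coneNorm (d : ℕ) (ρ : ℝ) : ℝ :=
  ∫ y : EuclideanSpace ℝ (Fin d), max (ρ - ‖y‖) 0

/-- the density of the distribution `P_σ`: mass `(1+σ_i δ)/(2m)` on each of the
balls `U_i = B(z_i,ρ)` and `U'_i = B(z_i+w_i,ρ)`, with cone-shaped profile. -/
def Pdens {m d : ℕ} (z w : Fin m → EuclideanSpace ℝ (Fin d)) (ρ δ : ℝ)
    (σ : Fin m → ℝ) (x : EuclideanSpace ℝ (Fin d)) : ℝ :=
  ∑ i, ((1 + σ i * δ) / (2 * m)) *
    ((max (ρ - ‖x - z i‖) 0 + max (ρ - ‖x - (z i + w i)‖) 0) / coneNorm d ρ)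

/-- the distribution `P_σ`. -/
def Pmeas {m d : ℕ} (z w : Fin m → EuclideanSpace ℝ (Fin d)) (ρ δ : ℝ)
    (σ : Fin m → ℝ) : Measure (EuclideanSpace ℝ (Fin d)) :=
  MeasureTheory.volume.withDensity (fun x => ENNReal.ofReal (Pdens z w ρ δ σ x))

/-- the quantizer `Q_σ`: on `U_i ∪ U'_i` it maps to `z_i + w_i/2` if `σ_i = −1`,
and to `z_i` on `U_i`, `z_i + w_i` on `U'_i`, if `σ_i = +1`. -/
def Qquant {m d : ℕ} (z w : Fin m → EuclideanSpace ℝ (Fin d)) (ρ : ℝ)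
    (σ : Fin m → ℝ) (x : EuclideanSpace ℝ (Fin d)) : EuclideanSpace ℝ (Fin d) :=
  if h : ∃ i, x ∈ closedBall (z i) ρ ∨ x ∈ closedBall (z i + w i) ρ then
    (if σ h.choose = -1 then z h.choose + (2 : ℝ)⁻¹ • w h.choose
     else if x ∈ closedBall (z h.choose) ρ then z h.choose
     else z h.choose + w h.choose)
  else 0

/-- the distortion of a quantizer `Q` under the source distribution `P`. -/
def Rquant {d : ℕ} (Q : EuclideanSpace ℝ (Fin d) → EuclideanSpace ℝ (Fin d))
    (P : Measure (EuclideanSpace ℝ (Fin d))) : ℝ :=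
  ∫ x, ‖x - Q x‖ ^ 2 ∂P

/-! Under `P_σ` each ball carries a translate of one even cone profile, so the second moment
about a point `q` of the cone centred at `c` is its second moment about `c` plus `‖q - c‖²`
times its mass. The separation makes `Q_τ` constant on each ball, hence `R(Q_τ, P_σ)` is an
explicit sum over cells: cell `i` pays an extra `Δ²/4` per unit of its mass `(1 + σ_i δ)/m`
exactly when `τ_i = -1`, both balls then being quantized to the midpoint at distance `Δ/2`.
Comparing `τ = σ'` with `τ = σ` cell by cell, the term linear in `σ_i - σ'_i` sums to zero,
leaving `Δ²δ/(8m) · |σ_i - σ'_i|`. -/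

theorem integral_withDensity_ofReal_eq_integral_mul {X : Type*} [MeasurableSpace X]
    {μ : Measure X} {f : X → ℝ} (hf : Measurable f) (hf0 : 0 ≤ f) (g : X → ℝ) :
    ∫ x, g x ∂μ.withDensity (fun x => ENNReal.ofReal (f x)) = ∫ x, f x * g x ∂μ := by
  rw [integral_withDensity_eq_integral_toReal_smul hf.ennreal_ofReal
    (ae_of_all _ fun _ => ENNReal.ofReal_lt_top)]
  simp only [ENNReal.toReal_ofReal (hf0 _), smul_eq_mul]

section Cone

variable {E : Type*} [NormedAddCommGroup E]

theorem continuous_max_sub_norm (ρ : ℝ) : Continuous fun y : E => max (ρ - ‖y‖) 0 := by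
  fun_prop

theorem hasCompactSupport_max_sub_norm [ProperSpace E] (ρ : ℝ) :
    HasCompactSupport fun y : E => max (ρ - ‖y‖) 0 := by
  refine HasCompactSupport.intro (isCompact_closedBall 0 ρ) fun y hy => ?_
  rw [mem_closedBall_zero_iff, not_le] at hy
  exact max_eq_right (by linarith)

theorem max_sub_norm_mul_congr {ρ a b : ℝ} {x c : E} (h : x ∈ closedBall c ρ → a = b) :
    a * max (ρ - ‖x - c‖) 0 = b * max (ρ - ‖x - c‖) 0 := by
  by_cases hx : x ∈ closedBall c ρ
  · rw [h hx]
  · rw [mem_closedBall, dist_eq_norm, not_le] at hx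
    rw [max_eq_right (by linarith), mul_zero, mul_zero]

theorem integrable_norm_sub_sq_mul_max_sub_norm [ProperSpace E] [MeasurableSpace E]
    [BorelSpace E] {μ : Measure E} [IsFiniteMeasureOnCompacts μ] (ρ : ℝ) (a c : E) :
    Integrable (fun x => ‖x - a‖ ^ 2 * max (ρ - ‖x - c‖) 0) μ :=
  (by fun_prop : Continuous _).integrable_of_hasCompactSupport
    ((hasCompactSupport_max_sub_norm ρ).comp_homeomorph (Homeomorph.subRight c)).mul_left

theorem integral_max_sub_norm_pos [ProperSpace E] [MeasurableSpace E] [BorelSpace E]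
    {μ : Measure E} [IsFiniteMeasureOnCompacts μ] [μ.IsOpenPosMeasure] {ρ : ℝ}
    (hρ : 0 < ρ) : 0 < ∫ y, max (ρ - ‖y‖) 0 ∂μ := by
  rw [integral_pos_iff_support_of_nonneg (f := fun y : E => max (ρ - ‖y‖) 0)
    (fun y => le_max_right _ _)
    ((continuous_max_sub_norm ρ).integrable_of_hasCompactSupport
      (hasCompactSupport_max_sub_norm ρ))]
  refine (measure_ball_pos μ 0 hρ).trans_le (measure_mono fun y hy => ?_)
  rw [mem_ball_zero_iff] at hy
  exact (lt_max_of_lt_left (sub_pos.mpr hy)).ne'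

end Cone

section BiasVariance

variable {E : Type*} [NormedAddCommGroup E] [InnerProductSpace ℝ E] [MeasurableSpace E]
  [BorelSpace E] {μ : Measure E} [μ.IsAddRightInvariant] [μ.IsNegInvariant]
  [IsFiniteMeasureOnCompacts μ]

theorem integral_norm_sub_sq_mul_of_even {φ : E → ℝ} (hφ : Continuous φ)
    (hφc : HasCompactSupport φ) (hφe : ∀ y, φ (-y) = φ y) (c q : E) :
    ∫ x, ‖x - q‖ ^ 2 * φ (x - c) ∂μ = ∫ y, ‖y‖ ^ 2 * φ y ∂μ + ‖q - c‖ ^ 2 * ∫ y, φ y ∂μ := by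
  set v := q - c
  have hint : ∀ g : E → ℝ, Continuous g → Integrable (fun y => g y * φ y) μ := fun g hg =>
    (hg.mul hφ).integrable_of_hasCompactSupport hφc.mul_left
  have hodd : ∫ y, 2 * inner ℝ y v * φ y ∂μ = 0 := by
    have h := integral_neg_eq_self (fun y => 2 * inner ℝ y v * φ y) μ
    simp only [inner_neg_left, hφe, mul_neg, neg_mul, integral_neg] at h
    linarith
  have h1 := hint (‖·‖ ^ 2) (by fun_prop)
  have h2 := hint (fun y => 2 * inner ℝ y v) (by fun_prop)
  calc ∫ x, ‖x - q‖ ^ 2 * φ (x - c) ∂μ = ∫ y, ‖y - v‖ ^ 2 * φ y ∂μ := by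
        rw [← integral_sub_right_eq_self (fun y => ‖y - v‖ ^ 2 * φ y) c]
        simp only [v, sub_sub_sub_cancel_right]
    _ = ∫ y, (‖y‖ ^ 2 * φ y - 2 * inner ℝ y v * φ y + ‖v‖ ^ 2 * φ y) ∂μ := by
        simp only [norm_sub_sq_real]; congr 1; ext y; ring
    _ = ∫ y, ‖y‖ ^ 2 * φ y ∂μ + ‖v‖ ^ 2 * ∫ y, φ y ∂μ := by
        rw [integral_add (by exact h1.sub h2) (hint _ continuous_const), integral_sub h1 h2,
          hodd, integral_const_mul, sub_zero]

theorem integral_norm_sub_sq_mul_max_sub_norm [FiniteDimensional ℝ E] (ρ : ℝ) (c q : E) :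
    ∫ x, ‖x - q‖ ^ 2 * max (ρ - ‖x - c‖) 0 ∂μ =
      ∫ y, ‖y‖ ^ 2 * max (ρ - ‖y‖) 0 ∂μ + ‖q - c‖ ^ 2 * ∫ y, max (ρ - ‖y‖) 0 ∂μ :=
  integral_norm_sub_sq_mul_of_even (continuous_max_sub_norm ρ)
    (hasCompactSupport_max_sub_norm ρ) (fun y => by rw [norm_neg]) c q

theorem integral_norm_sub_sq_mul_max_sub_norm_add [FiniteDimensional ℝ E] (ρ : ℝ)
    (a b c c' : E) :
    ∫ x, (‖x - a‖ ^ 2 * max (ρ - ‖x - c‖) 0 + ‖x - b‖ ^ 2 * max (ρ - ‖x - c'‖) 0) ∂μ =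
      2 * ∫ y, ‖y‖ ^ 2 * max (ρ - ‖y‖) 0 ∂μ +
        (‖a - c‖ ^ 2 + ‖b - c'‖ ^ 2) * ∫ y, max (ρ - ‖y‖) 0 ∂μ := by
  rw [integral_add (integrable_norm_sub_sq_mul_max_sub_norm ρ a c)
    (integrable_norm_sub_sq_mul_max_sub_norm ρ b c'), integral_norm_sub_sq_mul_max_sub_norm,
    integral_norm_sub_sq_mul_max_sub_norm]
  ring

end BiasVariance

section Quantizer

variable {m d : ℕ} {z w : Fin m → EuclideanSpace ℝ (Fin d)} {ρ Δ : ℝ}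

theorem Qquant_eq_of_mem {τ : Fin m → ℝ} {i : Fin m} {x : EuclideanSpace ℝ (Fin d)}
    (hx : x ∈ closedBall (z i) ρ ∪ closedBall (z i + w i) ρ)
    (huniq : ∀ j, x ∈ closedBall (z j) ρ ∪ closedBall (z j + w j) ρ → j = i) :
    Qquant z w ρ τ x = if τ i = -1 then z i + (2 : ℝ)⁻¹ • w i
      else if x ∈ closedBall (z i) ρ then z i else z i + w i := by
  have hex : ∃ j, x ∈ closedBall (z j) ρ ∨ x ∈ closedBall (z j + w j) ρ := ⟨i, hx⟩
  rw [Qquant, dif_pos hex, huniq _ hex.choose_spec]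

theorem dist_le_of_mem_union_closedBall {i : Fin m} {x : EuclideanSpace ℝ (Fin d)}
    (hw : ‖w i‖ = Δ) (hx : x ∈ closedBall (z i) ρ ∪ closedBall (z i + w i) ρ) :
    dist x (z i) ≤ ρ + Δ := by
  have hΔ : 0 ≤ Δ := hw ▸ norm_nonneg _
  rcases hx with hx | hx
  · linarith [mem_closedBall.mp hx]
  · calc dist x (z i) ≤ dist x (z i + w i) + dist (z i + w i) (z i) := dist_triangle _ _ _
      _ ≤ ρ + Δ := by
        rw [dist_self_add_left, hw]
        linarith [mem_closedBall.mp hx]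

theorem eq_of_mem_union_closedBall (hzsep : ∀ i j, i ≠ j → 6 * Δ ≤ dist (z i) (z j))
    (hw : ∀ i, ‖w i‖ = Δ) (hρ : ρ < 2 * Δ) {i j : Fin m} {x : EuclideanSpace ℝ (Fin d)}
    (hi : x ∈ closedBall (z i) ρ ∪ closedBall (z i + w i) ρ)
    (hj : x ∈ closedBall (z j) ρ ∪ closedBall (z j + w j) ρ) : j = i := by
  by_contra hne
  have := dist_triangle_left (z i) (z j) x
  linarith [hzsep i j (Ne.symm hne), dist_le_of_mem_union_closedBall (hw i) hi,
    dist_le_of_mem_union_closedBall (hw j) hj]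

theorem norm_sub_Qquant_sq_mul_left (hzsep : ∀ i j, i ≠ j → 6 * Δ ≤ dist (z i) (z j))
    (hw : ∀ i, ‖w i‖ = Δ) (hρ : ρ < 2 * Δ) (τ : Fin m → ℝ) (i : Fin m)
    (x : EuclideanSpace ℝ (Fin d)) :
    ‖x - Qquant z w ρ τ x‖ ^ 2 * max (ρ - ‖x - z i‖) 0 =
      ‖x - (if τ i = -1 then z i + (2 : ℝ)⁻¹ • w i else z i)‖ ^ 2 * max (ρ - ‖x - z i‖) 0 :=
  max_sub_norm_mul_congr fun hx => by
    rw [Qquant_eq_of_mem (Or.inl hx) fun j hj =>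
      eq_of_mem_union_closedBall hzsep hw hρ (Or.inl hx) hj]
    split_ifs <;> rfl

theorem norm_sub_Qquant_sq_mul_right (hzsep : ∀ i j, i ≠ j → 6 * Δ ≤ dist (z i) (z j))
    (hw : ∀ i, ‖w i‖ = Δ) (hρ : 2 * ρ < Δ) (τ : Fin m → ℝ) (i : Fin m)
    (x : EuclideanSpace ℝ (Fin d)) :
    ‖x - Qquant z w ρ τ x‖ ^ 2 * max (ρ - ‖x - (z i + w i)‖) 0 =
      ‖x - (if τ i = -1 then z i + (2 : ℝ)⁻¹ • w i else z i + w i)‖ ^ 2 *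
        max (ρ - ‖x - (z i + w i)‖) 0 :=
  max_sub_norm_mul_congr fun hx => by
    have hnx : x ∉ closedBall (z i) ρ := by
      refine (closedBall_disjoint_closedBall ?_).notMem_of_mem_right hx
      rw [dist_self_add_right, hw]
      linarith
    have hρ' : ρ < 2 * Δ := by linarith [hw i ▸ norm_nonneg (w i)]
    rw [Qquant_eq_of_mem (Or.inr hx) fun j hj =>
      eq_of_mem_union_closedBall hzsep hw hρ' (Or.inr hx) hj, if_neg hnx]

end Quantizer

section Distortion

variable {m d : ℕ} {z w : Fin m → EuclideanSpace ℝ (Fin d)} {ρ Δ δ : ℝ}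

theorem continuous_Pdens (σ : Fin m → ℝ) : Continuous (Pdens z w ρ δ σ) := by
  unfold Pdens
  fun_prop

theorem Pdens_nonneg {σ : Fin m → ℝ} (hσδ : ∀ i, 0 ≤ 1 + σ i * δ) : 0 ≤ Pdens z w ρ δ σ :=
  fun _ => Finset.sum_nonneg fun i _ => mul_nonneg (div_nonneg (hσδ i) (by positivity))
    (div_nonneg (by positivity) (integral_nonneg fun _ => le_max_right _ _))

theorem norm_sub_sq_add_norm_sub_sq_ite {i : Fin m} (hw : ‖w i‖ = Δ) (τ : Fin m → ℝ) :
    ‖(if τ i = -1 then z i + (2 : ℝ)⁻¹ • w i else z i) - z i‖ ^ 2 +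
      ‖(if τ i = -1 then z i + (2 : ℝ)⁻¹ • w i else z i + w i) - (z i + w i)‖ ^ 2 =
      if τ i = -1 then Δ ^ 2 / 2 else 0 := by
  split_ifs
  · rw [add_sub_cancel_left, show z i + (2 : ℝ)⁻¹ • w i - (z i + w i) = -((2 : ℝ)⁻¹ • w i) by
      module, norm_neg, norm_smul, hw, Real.norm_of_nonneg (by norm_num)]
    ring
  · simp

theorem Rquant_Qquant_Pmeas_eq (hzsep : ∀ i j, i ≠ j → 6 * Δ ≤ dist (z i) (z j))
    (hw : ∀ i, ‖w i‖ = Δ) (hρ0 : 0 < ρ) (hρ : 2 * ρ < Δ) {σ : Fin m → ℝ}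
    (hσδ : ∀ i, 0 ≤ 1 + σ i * δ) (τ : Fin m → ℝ) :
    Rquant (Qquant z w ρ τ) (Pmeas z w ρ δ σ) =
      (∑ i, (1 + σ i * δ) * (2 * (∫ y : EuclideanSpace ℝ (Fin d), ‖y‖ ^ 2 * max (ρ - ‖y‖) 0) /
        coneNorm d ρ + if τ i = -1 then Δ ^ 2 / 2 else 0)) / (2 * m) := by
  have hN : coneNorm d ρ ≠ 0 := (integral_max_sub_norm_pos hρ0).ne'
  let cell (i : Fin m) (x : EuclideanSpace ℝ (Fin d)) : ℝ :=
    ‖x - if τ i = -1 then z i + (2 : ℝ)⁻¹ • w i else z i‖ ^ 2 * max (ρ - ‖x - z i‖) 0 +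
      ‖x - if τ i = -1 then z i + (2 : ℝ)⁻¹ • w i else z i + w i‖ ^ 2 *
        max (ρ - ‖x - (z i + w i)‖) 0
  have hpoint : ∀ x, Pdens z w ρ δ σ x * ‖x - Qquant z w ρ τ x‖ ^ 2 =
      ∑ i, (1 + σ i * δ) / (2 * m) * (cell i x / coneNorm d ρ) := by
    intro x
    rw [Pdens, Finset.sum_mul]
    refine Finset.sum_congr rfl fun i _ => ?_
    simp only [cell]
    rw [← norm_sub_Qquant_sq_mul_left hzsep hw (by linarith) τ i x,
      ← norm_sub_Qquant_sq_mul_right hzsep hw hρ τ i x]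
    ring
  have hcell : ∀ i, ∫ x, cell i x =
      2 * (∫ y : EuclideanSpace ℝ (Fin d), ‖y‖ ^ 2 * max (ρ - ‖y‖) 0) +
        (if τ i = -1 then Δ ^ 2 / 2 else 0) * coneNorm d ρ := fun i => by
    rw [integral_norm_sub_sq_mul_max_sub_norm_add, norm_sub_sq_add_norm_sub_sq_ite (hw i),
      coneNorm]
  unfold Rquant Pmeas
  rw [integral_withDensity_ofReal_eq_integral_mul (continuous_Pdens σ).measurable
    (Pdens_nonneg hσδ)]
  simp only [hpoint]
  have hint : ∀ i, Integrable (cell i) := fun i =>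
    (integrable_norm_sub_sq_mul_max_sub_norm _ _ _).add
      (integrable_norm_sub_sq_mul_max_sub_norm _ _ _)
  rw [integral_finsetSum _ fun i _ => ((hint i).div_const _).const_mul _, Finset.sum_div]
  refine Finset.sum_congr rfl fun i _ => ?_
  rw [integral_const_mul, integral_div, hcell]
  field_simp

end Distortion

theorem mul_add_ite_eq_of_sign {s s' δ A D : ℝ} (hs : s = 1 ∨ s = -1)
    (hs' : s' = 1 ∨ s' = -1) :
    (1 + s * δ) * (A + if s' = -1 then D else 0) =
      (1 + s * δ) * (A + if s = -1 then D else 0) + D / 2 * (s - s') + D * δ / 2 * |s - s'| := by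
  rcases hs with rfl | rfl <;> rcases hs' with rfl | rfl <;> norm_num <;> ring

theorem sum_mul_add_ite_eq_of_sign {ι : Type*} [Fintype ι] {σ σ' : ι → ℝ}
    (hσ : ∀ i, σ i = 1 ∨ σ i = -1) (hσ' : ∀ i, σ' i = 1 ∨ σ' i = -1)
    (hσ0 : ∑ i, σ i = 0) (hσ'0 : ∑ i, σ' i = 0) (δ A D : ℝ) :
    ∑ i, (1 + σ i * δ) * (A + if σ' i = -1 then D else 0) =
      ∑ i, (1 + σ i * δ) * (A + if σ i = -1 then D else 0) + D * δ / 2 * ∑ i, |σ i - σ' i| := by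
  simp only [mul_add_ite_eq_of_sign (hσ _) (hσ' _), Finset.sum_add_distrib, ← Finset.mul_sum,
    Finset.sum_sub_distrib, hσ0, hσ'0, sub_zero, mul_zero, add_zero]

theorem stmt15_general (d k m : ℕ) (hk3 : 3 ≤ k)
    (hm : 3 * m = 2 * k)
    (M Δ ρ δ : ℝ) (hM : 0 < M)
    (hΔ : Δ = 5 * M / (32 * (m : ℝ) ^ ((1 : ℝ) / d)))
    (hρ : ρ = Δ / 16) (hδ0 : 0 < δ) (hδ : δ ≤ 1 / 3)
    (z w : Fin m → EuclideanSpace ℝ (Fin d))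
    (hzsep : ∀ i j, i ≠ j → 6 * Δ ≤ dist (z i) (z j))
    (hw : ∀ i, ‖w i‖ = Δ)
    (σ σ' : Fin m → ℝ)
    (hσ : ∀ i, σ i = 1 ∨ σ i = -1) (hσ' : ∀ i, σ' i = 1 ∨ σ' i = -1)
    (hσ0 : ∑ i, σ i = 0) (hσ'0 : ∑ i, σ' i = 0) :
    Rquant (Qquant z w ρ σ') (Pmeas z w ρ δ σ) =
      Rquant (Qquant z w ρ σ) (Pmeas z w ρ δ σ) +
        Δ ^ 2 * δ / (8 * m) * ∑ i, |σ i - σ' i| := by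
  have hm0 : (0 : ℝ) < m := by exact_mod_cast (by omega : 0 < m)
  have hΔ0 : 0 < Δ :=
    hΔ ▸ div_pos (by linarith) (mul_pos (by norm_num) (Real.rpow_pos_of_pos hm0 _))
  have hσδ : ∀ i, 0 ≤ 1 + σ i * δ := fun i => by
    rcases hσ i with h | h <;> rw [h] <;> linarith
  rw [Rquant_Qquant_Pmeas_eq hzsep hw (by linarith) (by linarith) hσδ,
    Rquant_Qquant_Pmeas_eq hzsep hw (by linarith) (by linarith) hσδ,
    sum_mul_add_ite_eq_of_sign hσ hσ' hσ0 hσ'0]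
  ring

/-- Proposition 4.7 (step of the minimax proof): exact expansion of the
distortion `R(Q_{σ'}, P_σ) = R(Q_σ, P_σ) + Δ²δ/(8m) · ρ(σ,σ')`. -/
theorem stmt15 (d k m : ℕ) (hd : 1 ≤ d) (hk3 : 3 ≤ k) (hdvd : 3 ∣ k)
    (hm : 3 * m = 2 * k)
    (M Δ ρ δ : ℝ) (hM : 0 < M)
    (hΔ : Δ = 5 * M / (32 * (m : ℝ) ^ ((1 : ℝ) / d)))
    (hρ : ρ = Δ / 16) (hδ0 : 0 < δ) (hδ : δ ≤ 1 / 3)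
    (z w : Fin m → EuclideanSpace ℝ (Fin d))
    (hz : ∀ i, z i ∈ closedBall (0 : EuclideanSpace ℝ (Fin d)) (M - ρ))
    (hzsep : ∀ i j, i ≠ j → 6 * Δ ≤ dist (z i) (z j))
    (hw : ∀ i, ‖w i‖ = Δ)
    (hU : ∀ i, closedBall (z i) ρ ⊆ closedBall (0 : EuclideanSpace ℝ (Fin d)) M ∧
      closedBall (z i + w i) ρ ⊆ closedBall (0 : EuclideanSpace ℝ (Fin d)) M)
    (σ σ' : Fin m → ℝ)
    (hσ : ∀ i, σ i = 1 ∨ σ i = -1) (hσ' : ∀ i, σ' i = 1 ∨ σ' i = -1)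
    (hσ0 : ∑ i, σ i = 0) (hσ'0 : ∑ i, σ' i = 0) :
    Rquant (Qquant z w ρ σ') (Pmeas z w ρ δ σ) =
      Rquant (Qquant z w ρ σ) (Pmeas z w ρ δ σ) +
        Δ ^ 2 * δ / (8 * m) * ∑ i, |σ i - σ' i| :=
  stmt15_general d k m hk3 hm M Δ ρ δ hM hΔ hρ hδ0 hδ z w hzsep hw σ σ' hσ hσ' hσ0 hσ'0

end
end
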